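/- The tensor families produced by the abstract topological recursion from the Eynard–Orantin tensors and from the modified (residue-constraint) tensors of the Airy curve coincide: S^{TR}_{g,n; i₁,…,i_n} = S_{g,n; i₁,…,i_n} for all admissible (g,n) and all positive-integer indices i₁, …, i_n. -/

import Mathlib

/-!
The two pairs of tensors differ only by the signs `(-1)^(j+1)` in `b` and `(-1)^(k+1)` in `c`.
The modified recursion produces tensors that vanish as soon as one index is even: only odd `i`
contribute, and `b`, `c` relate indices of equal parity. On lists of odd indices all the signs
are `+1`, so the modified tensors also solve the Eynard–Orantin recursion, whose solution is
unique by induction on `2g + n`.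
-/

namespace Airy

/-- The tensor `A` of the Airy curve: `a_{111} = 1/4`, all other components `0`. -/
noncomputable def aT (i j l : ℕ+) : ℂ := if i = 1 ∧ j = 1 ∧ l = 1 then 1/4 else 0

/-- The tensor `ε` of the Airy curve: `ε₃ = 1/16`, all other components `0`. -/
noncomputable def epsT (i : ℕ+) : ℂ := if i = 3 then 1/16 else 0

/-- The Eynard–Orantin `B`-tensor of the Airy curve. -/
noncomputable def bTR (i j l : ℕ+) : ℂ :=
  if Odd (i : ℕ) ∧ (i : ℕ) + (j : ℕ) = (l : ℕ) + 3 then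
    (1/4) * (-1 : ℂ) ^ ((j : ℕ) + 1) * (j : ℕ) else 0

/-- The Eynard–Orantin `C`-tensor of the Airy curve. -/
noncomputable def cTR (i j l : ℕ+) : ℂ :=
  if Even ((j : ℕ) + (l : ℕ)) ∧ (i : ℕ) = (j : ℕ) + (l : ℕ) + 3 then
    (1/4) * (-1 : ℂ) ^ ((l : ℕ) + 1) else 0

/-- The modified (residue-constraint) `B`-tensor of the Airy curve. -/
noncomputable def bM (i j l : ℕ+) : ℂ :=
  if Odd (i : ℕ) ∧ (i : ℕ) + (j : ℕ) = (l : ℕ) + 3 then (1/4) * (j : ℕ) else 0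

/-- The modified (residue-constraint) `C`-tensor of the Airy curve. -/
noncomputable def cM (i j l : ℕ+) : ℂ :=
  if Even ((j : ℕ) + (l : ℕ)) ∧ (i : ℕ) = (j : ℕ) + (l : ℕ) + 3 then 1/4 else 0

/-- `S_{g',n'}` with the convention that it is interpreted as `0` when `n' = 0` or
(`g' = 0` and `n' ≤ 2`). -/
noncomputable def SE (S : ℕ → List ℕ+ → ℂ) (g : ℕ) (l : List ℕ+) : ℂ :=
  if l.length = 0 ∨ (g = 0 ∧ l.length ≤ 2) then 0 else S g l

/-- The subsequence of a list indexed by a set `J` of positions. -/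
def subseq {α : Type*} (l : List α) (J : Finset (Fin l.length)) : List α :=
  ((List.finRange l.length).filter (fun p => p ∈ J)).map l.get

/-- `S` is defined by the abstract topological recursion from the tensors `(aT, b, c, epsT)`. -/
def Recur (b c : ℕ+ → ℕ+ → ℕ+ → ℂ) (S : ℕ → List ℕ+ → ℂ) : Prop :=
  (∀ i j l : ℕ+, S 0 [i, j, l] = 2 * aT i j l) ∧
  (∀ i : ℕ+, S 1 [i] = epsT i) ∧
  (∀ g n : ℕ, ((g = 0 ∧ 4 ≤ n) ∨ (g = 1 ∧ 2 ≤ n) ∨ (2 ≤ g ∧ 1 ≤ n)) →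
    ∀ (i : ℕ+) (t : List ℕ+), t.length = n - 1 →
      S g (i :: t)
        = 2 * (∑ α : Fin t.length, ∑ᶠ l : ℕ+,
            b i (t.get α) l * SE S g (l :: t.eraseIdx α))
        + (∑ g₁ ∈ Finset.range (g + 1), ∑ J : Finset (Fin t.length), ∑ᶠ j : ℕ+, ∑ᶠ l : ℕ+,
            c i j l * SE S g₁ (j :: subseq t J) * SE S (g - g₁) (l :: subseq t Jᶜ))
        + (if g = 0 then 0 else
            ∑ᶠ j : ℕ+, ∑ᶠ l : ℕ+, c i j l * SE S (g - 1) (j :: l :: t)))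

open List

lemma subseq_append_subseq_compl_perm {α : Type*} (t : List α) (J : Finset (Fin t.length)) :
    subseq t J ++ subseq t Jᶜ ~ t := by
  have hcompl : (finRange t.length).filter (fun p => p ∈ Jᶜ)
      = (finRange t.length).filter (fun p => !decide (p ∈ J)) :=
    filter_congr fun p _ => by simp
  unfold subseq
  rw [← map_append, hcompl]
  simpa using ((filter_append_perm (fun p => decide (p ∈ J)) (finRange t.length)).map t.get)

lemma mem_subseq_append_subseq_compl {α : Type*} {t : List α} (J : Finset (Fin t.length)) {x : α}
    (hx : x ∈ t) : x ∈ subseq t J ++ subseq t Jᶜ :=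
  (subseq_append_subseq_compl_perm t J).mem_iff.2 hx

lemma length_subseq_add_length_subseq_compl {α : Type*} (t : List α) (J : Finset (Fin t.length)) :
    (subseq t J).length + (subseq t Jᶜ).length = t.length := by
  rw [← length_append, (subseq_append_subseq_compl_perm t J).length_eq]

lemma get_cons_eraseIdx_perm {α : Type*} (t : List α) (a : Fin t.length) :
    t.get a :: t.eraseIdx a ~ t := by
  simpa using getElem_cons_eraseIdx_perm a.isLt

def IsStable (g n : ℕ) : Prop := (g = 0 ∧ 3 ≤ n) ∨ (1 ≤ g ∧ 1 ≤ n)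

lemma IsStable.three_le {g n : ℕ} (h : IsStable g n) : 3 ≤ 2 * g + n := by
  unfold IsStable at h
  omega

section SE

variable {S S' : ℕ → List ℕ+ → ℂ} {g : ℕ} {l : List ℕ+}

lemma SE_of_isStable (h : IsStable g l.length) : SE S g l = S g l :=
  if_neg (by unfold IsStable at h; omega)

lemma SE_of_not_isStable (h : ¬IsStable g l.length) : SE S g l = 0 :=
  if_pos (by unfold IsStable at h; omega)

lemma SE_congr (h : IsStable g l.length → S g l = S' g l) : SE S g l = SE S' g l := by
  by_cases hst : IsStable g l.length
  · rw [SE_of_isStable hst, SE_of_isStable hst, h hst]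
  · rw [SE_of_not_isStable hst, SE_of_not_isStable hst]

lemma SE_eq_zero_of (h : IsStable g l.length → S g l = 0) : SE S g l = 0 :=
  (SE_congr (S' := 0) h).trans (by simp [SE])

/- In a product of two stable factors whose weights `2g + n` add up to `m + 1`, both weights are
below `m`, since each is at least `3`. -/
lemma SE_mul_SE_congr {m g₁ g₂ : ℕ} {L₁ L₂ : List ℕ+}
    (h : ∀ g l, IsStable g l.length → 2 * g + l.length < m → S g l = S' g l)
    (hsum : 2 * g₁ + L₁.length + (2 * g₂ + L₂.length) = m + 1) :
    SE S g₁ L₁ * SE S g₂ L₂ = SE S' g₁ L₁ * SE S' g₂ L₂ := by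
  by_cases h₁ : IsStable g₁ L₁.length
  · by_cases h₂ : IsStable g₂ L₂.length
    · have := h₁.three_le
      have := h₂.three_le
      rw [SE_congr fun hst => h _ _ hst (by omega),
        SE_congr (l := L₂) fun hst => h _ _ hst (by omega)]
    · simp only [SE_of_not_isStable h₂, mul_zero]
  · simp only [SE_of_not_isStable h₁, zero_mul]

lemma SE_mul_SE_eq_zero {m g₁ g₂ : ℕ} {L₁ L₂ : List ℕ+}
    (h : ∀ g (l : List ℕ+), 2 * g + l.length < m → (∃ x ∈ l, Even (x : ℕ)) → SE S g l = 0)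
    (hsum : 2 * g₁ + L₁.length + (2 * g₂ + L₂.length) = m + 1)
    (hx : ∃ x ∈ L₁ ++ L₂, Even (x : ℕ)) :
    SE S g₁ L₁ * SE S g₂ L₂ = 0 := by
  by_cases h₁ : IsStable g₁ L₁.length
  · by_cases h₂ : IsStable g₂ L₂.length
    · have := h₁.three_le
      have := h₂.three_le
      obtain ⟨x, hx, hxe⟩ := hx
      rcases mem_append.1 hx with hx | hx
      · rw [h g₁ L₁ (by omega) ⟨x, hx, hxe⟩, zero_mul]
      · rw [h g₂ L₂ (by omega) ⟨x, hx, hxe⟩, mul_zero]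
    · rw [SE_of_not_isStable h₂, mul_zero]
  · rw [SE_of_not_isStable h₁, zero_mul]

end SE

theorem isStable_induction {P : ℕ → List ℕ+ → Prop}
    (base₀ : ∀ i j k, P 0 [i, j, k]) (base₁ : ∀ i, P 1 [i])
    (step : ∀ g i t,
      ((g = 0 ∧ 4 ≤ t.length + 1) ∨ (g = 1 ∧ 2 ≤ t.length + 1) ∨ (2 ≤ g ∧ 1 ≤ t.length + 1)) →
      (∀ g' l', IsStable g' l'.length → 2 * g' + l'.length < 2 * g + t.length + 1 → P g' l') →
      P g (i :: t))
    {g : ℕ} {l : List ℕ+} (hgl : IsStable g l.length) : P g l := by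
  induction hm : 2 * g + l.length using Nat.strong_induction_on generalizing g l with
  | _ m ih =>
  obtain _ | ⟨i, t⟩ := l
  · simp [IsStable] at hgl
  have ih' : ∀ g' l', IsStable g' l'.length → 2 * g' + l'.length < 2 * g + t.length + 1 → P g' l' :=
    fun g' l' hst hlt => ih _ (by simp only [length_cons] at hm; omega) hst rfl
  by_cases h₀ : g = 0 ∧ t.length = 2
  · obtain ⟨rfl, ht⟩ := h₀
    obtain ⟨j, k, rfl⟩ := length_eq_two.1 ht
    exact base₀ i j k
  by_cases h₁ : g = 1 ∧ t.length = 0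
  · obtain ⟨rfl, ht⟩ := h₁
    rw [length_eq_zero_iff.1 ht]
    exact base₁ i
  refine step g i t ?_ ih'
  unfold IsStable at hgl
  simp only [length_cons] at hgl
  omega

noncomputable def recursionRhs (b c : ℕ+ → ℕ+ → ℕ+ → ℂ) (F : ℕ → List ℕ+ → ℂ) (g : ℕ) (i : ℕ+)
    (t : List ℕ+) : ℂ :=
  2 * (∑ α : Fin t.length, ∑ᶠ l : ℕ+, b i (t.get α) l * F g (l :: t.eraseIdx α))
    + (∑ g₁ ∈ Finset.range (g + 1), ∑ J : Finset (Fin t.length), ∑ᶠ j : ℕ+, ∑ᶠ l : ℕ+,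
        c i j l * F g₁ (j :: subseq t J) * F (g - g₁) (l :: subseq t Jᶜ))
    + (if g = 0 then 0 else ∑ᶠ j : ℕ+, ∑ᶠ l : ℕ+, c i j l * F (g - 1) (j :: l :: t))

section Recursion

variable {b c : ℕ+ → ℕ+ → ℕ+ → ℂ} {S S' : ℕ → List ℕ+ → ℂ}

lemma Recur.eq_recursionRhs (hS : Recur b c S) {g : ℕ} {i : ℕ+} {t : List ℕ+}
    (hg : (g = 0 ∧ 4 ≤ t.length + 1) ∨ (g = 1 ∧ 2 ≤ t.length + 1) ∨ (2 ≤ g ∧ 1 ≤ t.length + 1)) :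
    S g (i :: t) = recursionRhs b c (SE S) g i t :=
  hS.2.2 g _ hg i t rfl

lemma recursionRhs_congr {g : ℕ} {i : ℕ+} {t : List ℕ+}
    (h : ∀ g' l', IsStable g' l'.length → 2 * g' + l'.length < 2 * g + t.length + 1 →
      S g' l' = S' g' l') :
    recursionRhs b c (SE S) g i t = recursionRhs b c (SE S') g i t := by
  have hSE : ∀ g' l', 2 * g' + l'.length < 2 * g + t.length + 1 → SE S g' l' = SE S' g' l' :=
    fun g' l' hlt => SE_congr fun hst => h g' l' hst hlt
  unfold recursionRhs
  refine congrArg₂ (· + ·) (congrArg₂ (· + ·) ?_ ?_) ?_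
  · refine congrArg _ (Finset.sum_congr rfl fun α _ => finsum_congr fun l => ?_)
    have := (get_cons_eraseIdx_perm t α).length_eq
    rw [hSE]
    simp only [length_cons] at this ⊢
    omega
  · refine Finset.sum_congr rfl fun g₁ hg₁ => Finset.sum_congr rfl fun J _ =>
      finsum_congr fun j => finsum_congr fun l => ?_
    have := length_subseq_add_length_subseq_compl t J
    rw [Finset.mem_range] at hg₁
    rw [mul_assoc, mul_assoc, SE_mul_SE_congr h (by simp only [length_cons]; omega)]
  · refine if_ctx_congr Iff.rfl (fun _ => rfl) fun hg =>
      finsum_congr fun j => finsum_congr fun l => ?_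
    rw [hSE]
    simp only [length_cons]
    omega

theorem Recur.eq_of_recur (hS : Recur b c S) (hS' : Recur b c S') {g : ℕ} {l : List ℕ+}
    (hgl : IsStable g l.length) : S g l = S' g l := by
  refine isStable_induction (P := fun g l => S g l = S' g l) (fun i j k => by rw [hS.1, hS'.1])
    (fun i => by rw [hS.2.1, hS'.2.1]) (fun g i t hg ih => ?_) hgl
  rw [hS.eq_recursionRhs hg, hS'.eq_recursionRhs hg]
  exact recursionRhs_congr ih

end Recursion

lemma bTR_mul_eq_bM_mul {i j l : ℕ+} {x : ℂ} (hx : Even (l : ℕ) → x = 0) :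
    bTR i j l * x = bM i j l * x := by
  unfold bTR bM
  split_ifs with h
  · rcases Nat.even_or_odd (j : ℕ) with hj | hj
    · have hi := h.1
      rw [hx (by rw [Nat.even_iff] at hj ⊢; rw [Nat.odd_iff] at hi; omega), mul_zero, mul_zero]
    · rw [hj.add_one.neg_one_pow, mul_one]
  · rfl

lemma cTR_mul_eq_cM_mul {i j l : ℕ+} {x : ℂ} (hx : Even (j : ℕ) → x = 0) :
    cTR i j l * x = cM i j l * x := by
  unfold cTR cM
  split_ifs with h
  · rcases Nat.even_or_odd (l : ℕ) with hl | hl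
    · rw [hx ((Nat.even_add.1 h.1).2 hl), mul_zero, mul_zero]
    · rw [hl.add_one.neg_one_pow, mul_one]
  · rfl

lemma recursionRhs_tr_eq_recursionRhs_modified {F : ℕ → List ℕ+ → ℂ}
    (hF : ∀ g (l : List ℕ+), (∃ x ∈ l, Even (x : ℕ)) → F g l = 0) (g : ℕ) (i : ℕ+) (t : List ℕ+) :
    recursionRhs bTR cTR F g i t = recursionRhs bM cM F g i t := by
  have hF_cons : ∀ g (y : ℕ+) l, Even (y : ℕ) → F g (y :: l) = 0 :=
    fun g y l hy => hF g _ ⟨y, mem_cons_self, hy⟩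
  unfold recursionRhs
  congr 2
  · exact congrArg _ (Finset.sum_congr rfl fun α _ => finsum_congr fun l =>
      bTR_mul_eq_bM_mul (hF_cons _ _ _))
  · refine Finset.sum_congr rfl fun g₁ _ => Finset.sum_congr rfl fun J _ =>
      finsum_congr fun j => finsum_congr fun l => ?_
    rw [mul_assoc, mul_assoc]
    exact cTR_mul_eq_cM_mul fun hj => by rw [hF_cons _ _ _ hj, zero_mul]
  · exact finsum_congr fun j => finsum_congr fun l => cTR_mul_eq_cM_mul (hF_cons _ _ _)

lemma odd_and_add_eq_of_bM_ne_zero {i j l : ℕ+} (h : bM i j l ≠ 0) :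
    Odd (i : ℕ) ∧ (i : ℕ) + j = l + 3 := by
  unfold bM at h
  split_ifs at h with hc
  · exact hc
  · exact absurd rfl h

lemma odd_of_cM_ne_zero {i j l : ℕ+} (h : cM i j l ≠ 0) : Odd (i : ℕ) := by
  unfold cM at h
  split_ifs at h with hc
  · rw [hc.2]
    exact hc.1.add_odd (by decide)
  · exact absurd rfl h

lemma recursionRhs_modified_eq_zero {S : ℕ → List ℕ+ → ℂ} {g : ℕ} {i : ℕ+} {t : List ℕ+}
    (h : ∀ g' (l' : List ℕ+), 2 * g' + l'.length < 2 * g + t.length + 1 →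
      (∃ x ∈ l', Even (x : ℕ)) → SE S g' l' = 0)
    (hx : ∃ x ∈ i :: t, Even (x : ℕ)) :
    recursionRhs bM cM (SE S) g i t = 0 := by
  obtain ⟨x, hx, hxe⟩ := hx
  have hxt : Odd (i : ℕ) → x ∈ t := fun hi =>
    (mem_cons.1 hx).resolve_left (by rintro rfl; exact Nat.not_even_iff_odd.2 hi hxe)
  have hB : ∀ α l, bM i (t.get α) l * SE S g (l :: t.eraseIdx α) = 0 := by
    intro α l
    by_cases hb : bM i (t.get α) l = 0
    · rw [hb, zero_mul]
    obtain ⟨hi, hsum⟩ := odd_and_add_eq_of_bM_ne_zero hb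
    have hperm := get_cons_eraseIdx_perm t α
    have heven : ∃ y ∈ l :: t.eraseIdx α, Even (y : ℕ) := by
      rcases mem_cons.1 (hperm.mem_iff.2 (hxt hi)) with rfl | hmem
      · refine ⟨l, mem_cons_self, ?_⟩
        rw [Nat.even_iff] at hxe ⊢
        rw [Nat.odd_iff] at hi
        omega
      · exact ⟨x, mem_cons_of_mem _ hmem, hxe⟩
    have hlen := hperm.length_eq
    simp only [length_cons] at hlen
    rw [h g _ (by simp only [length_cons]; omega) heven, mul_zero]
  have hC : ∀ g₁ ∈ Finset.range (g + 1), ∀ J j l,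
      cM i j l * SE S g₁ (j :: subseq t J) * SE S (g - g₁) (l :: subseq t Jᶜ) = 0 := by
    intro g₁ hg₁ J j l
    by_cases hc : cM i j l = 0
    · rw [hc, zero_mul, zero_mul]
    have heven : ∃ y ∈ (j :: subseq t J) ++ (l :: subseq t Jᶜ), Even (y : ℕ) := by
      refine ⟨x, ?_, hxe⟩
      have := mem_subseq_append_subseq_compl J (hxt (odd_of_cM_ne_zero hc))
      simp only [mem_append, mem_cons] at this ⊢
      tauto
    have := length_subseq_add_length_subseq_compl t J
    rw [Finset.mem_range] at hg₁
    rw [mul_assoc, SE_mul_SE_eq_zero h (by simp only [length_cons]; omega) heven, mul_zero]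
  have hD : g ≠ 0 → ∀ j l, cM i j l * SE S (g - 1) (j :: l :: t) = 0 := by
    intro hg j l
    by_cases hc : cM i j l = 0
    · rw [hc, zero_mul]
    rw [h _ _ (by simp only [length_cons]; omega)
      ⟨x, mem_cons_of_mem _ (mem_cons_of_mem _ (hxt (odd_of_cM_ne_zero hc))), hxe⟩, mul_zero]
  unfold recursionRhs
  rw [Finset.sum_eq_zero fun α _ => finsum_eq_zero_of_forall_eq_zero (hB α),
    Finset.sum_eq_zero fun g₁ hg₁ => Finset.sum_eq_zero fun J _ =>
      finsum_eq_zero_of_forall_eq_zero fun j => finsum_eq_zero_of_forall_eq_zero (hC g₁ hg₁ J j)]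
  split_ifs with hg
  · simp
  · simp [finsum_eq_zero_of_forall_eq_zero fun j => finsum_eq_zero_of_forall_eq_zero (hD hg j)]

theorem Recur.SE_eq_zero_of_even {S : ℕ → List ℕ+ → ℂ} (hS : Recur bM cM S) {g : ℕ}
    {l : List ℕ+} (hx : ∃ x ∈ l, Even (x : ℕ)) : SE S g l = 0 := by
  refine SE_eq_zero_of fun hgl => isStable_induction
    (P := fun g l => (∃ x ∈ l, Even (x : ℕ)) → S g l = 0) ?_ ?_ ?_ hgl hx
  · rintro i j k ⟨x, hx, hxe⟩
    rw [hS.1, aT, if_neg, mul_zero]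
    rintro ⟨rfl, rfl, rfl⟩
    simp only [mem_cons, or_self, not_mem_nil, or_false] at hx
    exact absurd (hx ▸ hxe) (by decide)
  · rintro i ⟨x, hx, hxe⟩
    rw [mem_singleton] at hx
    subst hx
    rw [hS.2.1, epsT, if_neg]
    rintro rfl
    exact absurd hxe (by decide)
  · intro g i t hg ih hx
    rw [hS.eq_recursionRhs hg]
    exact recursionRhs_modified_eq_zero
      (fun g' l' hlt hx' => SE_eq_zero_of fun hst => ih g' l' hst hlt hx') hx

theorem recur_tr_of_recur_modified {S : ℕ → List ℕ+ → ℂ} (hS : Recur bM cM S) :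
    Recur bTR cTR S := by
  refine ⟨hS.1, hS.2.1, fun g n hg i t ht => ?_⟩
  change S g (i :: t) = recursionRhs bTR cTR (SE S) g i t
  rw [recursionRhs_tr_eq_recursionRhs_modified (fun _ _ => hS.SE_eq_zero_of_even)]
  exact hS.2.2 g n hg i t ht

/-- the abstract topological recursion produces the same tensors from the
Eynard–Orantin tensors `(bTR, cTR)` and from the modified residue-constraint tensors
`(bM, cM)` of the Airy curve. -/
theorem tr_eq_modified_tr (S STR : ℕ → List ℕ+ → ℂ)
    (hM : Recur bM cM S) (hTR : Recur bTR cTR STR) :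
    ∀ (g : ℕ) (l : List ℕ+),
      ((g = 0 ∧ 3 ≤ l.length) ∨ (1 ≤ g ∧ 1 ≤ l.length)) → STR g l = S g l := by
  intro g l hgl
  exact hTR.eq_of_recur (recur_tr_of_recur_modified hM) hgl

end Airy
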